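/- The function x ↦ x − f(x), where f(x) = e^{−x²/2} / ∫_x^∞ e^{−t²/2} dt, is (monotone) increasing on ℝ. -/

import Mathlib

open Real MeasureTheory Set Filter Topology

noncomputable def millE (x : ℝ) : ℝ := Real.exp (-x ^ 2 / 2)
noncomputable def millG (x : ℝ) : ℝ := ∫ t in Set.Ici x, millE t
noncomputable def millR (x : ℝ) : ℝ := (x + Real.sqrt (x ^ 2 + 4)) / 2

lemma millE_pos (x : ℝ) : 0 < millE x := Real.exp_pos _

lemma millE_integrable : Integrable millE := by
  have h := integrable_exp_neg_mul_sq (b := (2⁻¹ : ℝ)) (by norm_num)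
  refine h.congr (Filter.Eventually.of_forall fun x => ?_)
  unfold millE; ring_nf

lemma millE_hasDerivAt (x : ℝ) : HasDerivAt millE (-x * millE x) x := by
  have h1 : HasDerivAt (fun x : ℝ => -x ^ 2 / 2) (-x) x := by
    have := ((hasDerivAt_pow 2 x).neg.div_const 2)
    exact this.congr_deriv (by norm_num; ring)
  have := h1.exp
  exact this.congr_deriv (by unfold millE; ring)

lemma millG_pos (x : ℝ) : 0 < millG x := by
  rw [millG, setIntegral_pos_iff_support_of_nonneg_ae]
  · have : Function.support millE = Set.univ := by
      ext t; simp [Function.support, (millE_pos t).ne']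
    rw [this, Set.univ_inter]
    simp [Real.volume_Ici]
  · filter_upwards with t using (millE_pos t).le
  · exact millE_integrable.integrableOn

lemma millG_eq (x : ℝ) : millG x = millG 0 - ∫ t in (0:ℝ)..x, millE t := by
  have hI := millE_integrable
  have h1 := intervalIntegral.integral_Iic_add_Ioi (b := x) hI.integrableOn hI.integrableOn
  have h2 := intervalIntegral.integral_Iic_add_Ioi (b := (0:ℝ)) hI.integrableOn hI.integrableOn
  have h3 := intervalIntegral.integral_Iic_sub_Iic (a := (0:ℝ)) (b := x) hI.integrableOn hI.integrableOn
  have e1 : millG x = ∫ t in Set.Ioi x, millE t := MeasureTheory.integral_Ici_eq_integral_Ioi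
  have e2 : millG 0 = ∫ t in Set.Ioi (0:ℝ), millE t := MeasureTheory.integral_Ici_eq_integral_Ioi
  rw [e1, e2]; linarith

lemma millG_hasDerivAt (x : ℝ) : HasDerivAt millG (-(millE x)) x := by
  have hcont : Continuous millE := by
    unfold millE; continuity
  have h : HasDerivAt (fun u => ∫ t in (0:ℝ)..u, millE t) (millE x) x :=
    intervalIntegral.integral_hasDerivAt_right
      (millE_integrable.intervalIntegrable)
      (hcont.stronglyMeasurableAtFilter _ _) hcont.continuousAt
  have : HasDerivAt (fun u => millG 0 - ∫ t in (0:ℝ)..u, millE t) (-(millE x)) x :=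
    (h.const_sub _)
  exact this.congr_of_eventuallyEq (Filter.Eventually.of_forall fun y => millG_eq y)

lemma millR_pos (x : ℝ) : 0 < millR x := by
  have h : |x| < Real.sqrt (x ^ 2 + 4) := by
    rw [← Real.sqrt_sq_eq_abs]
    exact Real.sqrt_lt_sqrt (sq_nonneg x) (by linarith)
  have := neg_abs_le x
  unfold millR; nlinarith

lemma millR_sq (x : ℝ) : millR x ^ 2 = x * millR x + 1 := by
  have h : Real.sqrt (x ^ 2 + 4) ^ 2 = x ^ 2 + 4 := Real.sq_sqrt (by positivity)
  unfold millR; nlinarith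

lemma millR_hasDerivAt (x : ℝ) :
    HasDerivAt millR ((1 + x / Real.sqrt (x ^ 2 + 4)) / 2) x := by
  have h0 : (0:ℝ) < x ^ 2 + 4 := by positivity
  have hs : HasDerivAt (fun x : ℝ => Real.sqrt (x ^ 2 + 4))
      ((2 * x) / (2 * Real.sqrt (x ^ 2 + 4))) x := by
    have hp : HasDerivAt (fun x : ℝ => x ^ 2 + 4) (2 * x) x := by
      have := (hasDerivAt_pow 2 x).add_const 4
      exact this.congr_deriv (by norm_num)
    exact hp.sqrt h0.ne'
  have : HasDerivAt millR ((1 + (2 * x) / (2 * Real.sqrt (x ^ 2 + 4))) / 2) x :=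
    ((hasDerivAt_id x).add hs).div_const 2
  convert this using 1
  have hsp : 0 < Real.sqrt (x ^ 2 + 4) := Real.sqrt_pos.2 h0
  field_simp

lemma millR_deriv_le_one (x : ℝ) : (1 + x / Real.sqrt (x ^ 2 + 4)) / 2 ≤ 1 := by
  have hsp : 0 < Real.sqrt (x ^ 2 + 4) := Real.sqrt_pos.2 (by positivity)
  have h : x ≤ Real.sqrt (x ^ 2 + 4) := by
    calc x ≤ |x| := le_abs_self x
    _ = Real.sqrt (x ^ 2) := (Real.sqrt_sq_eq_abs x).symm
    _ ≤ Real.sqrt (x ^ 2 + 4) := Real.sqrt_le_sqrt (by linarith)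
  have : x / Real.sqrt (x ^ 2 + 4) ≤ 1 := (div_le_one hsp).2 h
  linarith

/-- Key: `millG x * millR x ≥ millE x`. -/
lemma millG_mul_millR_ge (x : ℝ) : millE x ≤ millG x * millR x := by
  -- v = millG - millE / millR is antitone and tends to 0
  set v : ℝ → ℝ := fun x => millG x - millE x / millR x with hv
  have hvderiv : ∀ y : ℝ, HasDerivAt v
      (-(millE y) - ((-y * millE y) * millR y - millE y * ((1 + y / Real.sqrt (y ^ 2 + 4)) / 2)) / millR y ^ 2) y := by
    intro y
    exact (millG_hasDerivAt y).sub (((millE_hasDerivAt y).div (millR_hasDerivAt y) (millR_pos y).ne'))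
  have hvnonpos : ∀ y : ℝ,
      (-(millE y) - ((-y * millE y) * millR y - millE y * ((1 + y / Real.sqrt (y ^ 2 + 4)) / 2)) / millR y ^ 2) ≤ 0 := by
    intro y
    set r := millR y
    set r' := (1 + y / Real.sqrt (y ^ 2 + 4)) / 2
    have hr : 0 < r := millR_pos y
    have hr2 : r ^ 2 = y * r + 1 := millR_sq y
    have hr' : r' ≤ 1 := millR_deriv_le_one y
    have he : 0 < millE y := millE_pos y
    have heq : -(millE y) - ((-y * millE y) * r - millE y * r') / r ^ 2
        = (millE y * (r' - 1)) / r ^ 2 := by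
      field_simp
      linear_combination (-1 : ℝ) * hr2
    rw [heq]
    exact div_nonpos_of_nonpos_of_nonneg (by nlinarith) (by positivity)
  have hanti : Antitone v :=
    antitone_of_deriv_nonpos (fun y => (hvderiv y).differentiableAt)
      (fun y => by rw [(hvderiv y).deriv]; exact hvnonpos y)
  have hlim : Tendsto v atTop (𝓝 0) := by
    have hG : Tendsto millG atTop (𝓝 0) := by
      have h1 : Tendsto (fun x => ∫ t in (0:ℝ)..x, millE t) atTop (𝓝 (∫ t in Set.Ioi (0:ℝ), millE t)) :=
        intervalIntegral_tendsto_integral_Ioi 0 millE_integrable.integrableOn tendsto_id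
      have h2 : Tendsto (fun x => millG 0 - ∫ t in (0:ℝ)..x, millE t) atTop
          (𝓝 (millG 0 - ∫ t in Set.Ioi (0:ℝ), millE t)) := (tendsto_const_nhds.sub h1)
      have e2 : millG 0 = ∫ t in Set.Ioi (0:ℝ), millE t := MeasureTheory.integral_Ici_eq_integral_Ioi
      rw [← e2, sub_self] at h2
      exact h2.congr (fun y => (millG_eq y).symm)
    have hE : Tendsto (fun x => millE x / millR x) atTop (𝓝 0) := by
      have hEt : Tendsto millE atTop (𝓝 0) := by
        have : Tendsto (fun x : ℝ => -x ^ 2 / 2) atTop atBot := by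
          have h1 : Tendsto (fun x : ℝ => x ^ 2) atTop atTop := tendsto_pow_atTop two_ne_zero
          have := h1.atTop_mul_const_of_neg (show (-(1:ℝ)/2) < 0 by norm_num)
          convert this using 2 with y
          ring
        exact Real.tendsto_exp_atBot.comp this
      apply squeeze_zero' (g := millE)
      · filter_upwards with y using (div_pos (millE_pos y) (millR_pos y)).le
      · filter_upwards [Filter.eventually_ge_atTop (0:ℝ)] with y hy
        have hr1 : 1 ≤ millR y := by
          have : (2:ℝ) ≤ Real.sqrt (y ^ 2 + 4) := by
            rw [show (2:ℝ) = Real.sqrt 4 by rw [show (4:ℝ) = 2^2 by norm_num, Real.sqrt_sq]; norm_num]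
            exact Real.sqrt_le_sqrt (by nlinarith)
          unfold millR; linarith
        rw [div_le_iff₀ (by linarith)]
        nlinarith [millE_pos y]
      · exact hEt
    have := hG.sub hE
    simpa using this
  have h0 : 0 ≤ v x := by
    apply le_of_tendsto hlim
    filter_upwards [Filter.eventually_ge_atTop x] with y hy using hanti hy
  have hr : 0 < millR x := millR_pos x
  have h0' : millE x / millR x ≤ millG x := by
    have := h0; simp only [hv] at this; linarith
  have : millE x / millR x ≤ millG x := h0'
  calc millE x = millE x / millR x * millR x := by field_simp
  _ ≤ millG x * millR x := by
      apply mul_le_mul_of_nonneg_right this hr.le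

theorem sub_inverse_mills_ratio_monotone :
    Monotone (fun x : ℝ =>
      x - Real.exp (-x ^ 2 / 2) / ∫ t in Set.Ici x, Real.exp (-t ^ 2 / 2)) := by
  have hF : ∀ x : ℝ, HasDerivAt (fun x => x - millE x / millG x)
      (1 - ((-x * millE x) * millG x - millE x * (-(millE x))) / millG x ^ 2) x := by
    intro x
    exact (hasDerivAt_id x).sub ((millE_hasDerivAt x).div (millG_hasDerivAt x) (millG_pos x).ne')
  have hF0 : ∀ x : ℝ, 0 ≤ 1 - ((-x * millE x) * millG x - millE x * (-(millE x))) / millG x ^ 2 := by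
    intro x
    set e := millE x; set g := millG x; set r := millR x
    have hg : 0 < g := millG_pos x
    have he : 0 < e := millE_pos x
    have hr : 0 < r := millR_pos x
    have hr2 : r ^ 2 = x * r + 1 := millR_sq x
    have hkey : e ≤ g * r := millG_mul_millR_ge x
    rw [sub_nonneg, div_le_one (by positivity)]
    have H : 0 ≤ (g * r - e) * (g + e * r) :=
      mul_nonneg (sub_nonneg.2 hkey) (by positivity)
    have hT : (g * r - e) * (g + e * r) = r * (g ^ 2 + x * e * g - e ^ 2) := by
      linear_combination e * g * hr2
    rw [hT] at H
    have hTn : 0 ≤ g ^ 2 + x * e * g - e ^ 2 := nonneg_of_mul_nonneg_right H hr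
    nlinarith [hTn]
  have hmono : Monotone (fun x => x - millE x / millG x) :=
    monotone_of_deriv_nonneg (fun y => (hF y).differentiableAt)
      (fun y => by rw [(hF y).deriv]; exact hF0 y)
  exact hmono
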